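/- In the field F = ℚ(p, x₁, x₂, x₃) one has ω(1,2) = ((2p²−p−1)/p⁶)·sym_{1,1,1} + (1/p⁴)·sym_{2,1,0}, i.e. the spherical image of the GL₃ Hecke operator t(1,p,p²) equals this explicit symmetric polynomial expression. -/

import Mathlib

/-! Common setup: the field `F = ℚ(p, x₁, x₂, x₃)`, realized as the fraction field of the
polynomial ring `ℚ[p, x₁, x₂, x₃]`.  `p` is the variable of index `0`, and `x i` (for
`i : Fin 3`) are the variables `x₁, x₂, x₃`. -/

noncomputable section

/-- The rational function field `ℚ(p, x₁, x₂, x₃)`. -/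
abbrev F : Type := FractionRing (MvPolynomial (Fin 4) ℚ)

/-- The indeterminate `p`. -/
def p : F := algebraMap (MvPolynomial (Fin 4) ℚ) F (MvPolynomial.X 0)

/-- The indeterminates `x₁, x₂, x₃` (as `x 0, x 1, x 2`). -/
def x (i : Fin 3) : F := algebraMap (MvPolynomial (Fin 4) ℚ) F (MvPolynomial.X i.succ)

/-- The monomial symmetric polynomial `sym_{a,b,c}` in `x₁, x₂, x₃`: the sum of all *distinct*
monomials obtained from `x₁^a x₂^b x₃^c` by permuting the variables. -/
def sym (a b c : ℕ) : F :=
  ∑ e ∈ Finset.univ.image (fun σ : Equiv.Perm (Fin 3) => (![a, b, c]) ∘ σ),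
    ∏ j, x j ^ e j

/-- Andrianov's formula for the Satake spherical image `ω(λ,μ) = ω(t(1, p^λ, p^μ))`
of the `GL₃` Hecke operator `t(1, p^λ, p^μ)`, for `0 ≤ λ ≤ μ`. -/
def ω (l m : ℕ) : F :=
  ((if l = 0 ∧ m = 0 then p ^ 3 / ((p + 1) * (p ^ 2 + p + 1))
    else if l = 0 ∨ l = m then p / (p + 1)
    else 1) / p ^ (2 * l + m)) *
  ∑ σ : Equiv.Perm (Fin 3),
    x (σ 1) ^ l * x (σ 2) ^ m *
      ((x (σ 1) - x (σ 0) / p) * (x (σ 2) - x (σ 0) / p) * (x (σ 2) - x (σ 1) / p)) /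
      ((x (σ 1) - x (σ 0)) * (x (σ 2) - x (σ 0)) * (x (σ 2) - x (σ 1)))

/-! For `0 < λ < μ` the normalising constant of Andrianov's formula is just `p^{-(2λ+μ)}`.
Over the common denominator, the Vandermonde product `(x₂-x₁)(x₃-x₁)(x₃-x₂)`, the six terms of
the sum over `S₃` add up to an alternating polynomial, which is the Vandermonde product times
the symmetric polynomial `(2 - 1/p - 1/p²)·sym_{1,1,1} + sym_{2,1,0}`; this is an identity in
any field once `p ≠ 0` and the `xᵢ` are distinct. -/

open Finset

theorem sum_perm_fin_three {M : Type*} [AddCommMonoid M] (f : Fin 3 → Fin 3 → Fin 3 → M) :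
    ∑ σ : Equiv.Perm (Fin 3), f (σ 0) (σ 1) (σ 2) =
      f 0 1 2 + f 0 2 1 + f 1 0 2 + f 1 2 0 + f 2 0 1 + f 2 1 0 := by
  have huniv : (univ : Finset (Equiv.Perm (Fin 3))) =
      {1, Equiv.swap 1 2, Equiv.swap 0 1, Equiv.swap 0 1 * Equiv.swap 1 2,
        Equiv.swap 1 2 * Equiv.swap 0 1, Equiv.swap 0 2} := by decide
  rw [huniv]
  simp (disch := decide) only [sum_insert, sum_singleton, Equiv.Perm.mul_apply,
    Equiv.Perm.one_apply, Equiv.swap_apply_def]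
  abel

theorem x_injective : Function.Injective x := fun _ _ h =>
  Fin.succ_injective _ <| MvPolynomial.X_injective <| IsFractionRing.injective _ F h

theorem p_ne_zero : p ≠ 0 := by
  rw [p, Ne, IsFractionRing.to_map_eq_zero_iff]
  exact MvPolynomial.X_ne_zero 0

theorem sym_self (a : ℕ) : sym a a a = (x 0 * x 1 * x 2) ^ a := by
  have hconst : ![a, a, a] = Function.const (Fin 3) a := by
    ext i; fin_cases i <;> rfl
  simp only [sym, hconst, Function.const_comp, image_const univ_nonempty, sum_singleton,
    Fin.prod_univ_three, Function.const_apply, mul_pow]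

theorem sym_of_injective {a b c : ℕ} (h : Function.Injective ![a, b, c]) :
    sym a b c = x 0 ^ a * x 1 ^ b * x 2 ^ c + x 0 ^ a * x 1 ^ c * x 2 ^ b +
      x 0 ^ b * x 1 ^ a * x 2 ^ c + x 0 ^ b * x 1 ^ c * x 2 ^ a +
      x 0 ^ c * x 1 ^ a * x 2 ^ b + x 0 ^ c * x 1 ^ b * x 2 ^ a := by
  have hinj : Function.Injective fun σ : Equiv.Perm (Fin 3) => ![a, b, c] ∘ σ :=
    fun σ τ hστ => Equiv.ext fun i => h (congrFun hστ i)
  rw [sym, sum_image hinj.injOn]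
  simp only [Fin.prod_univ_three, Function.comp_apply]
  exact sum_perm_fin_three fun i j k => x 0 ^ ![a, b, c] i * x 1 ^ ![a, b, c] j * x 2 ^ ![a, b, c] k

theorem satake_sum_one_two {K : Type*} [Field K] {q : K} (hq : q ≠ 0) {v : Fin 3 → K}
    (hv : Function.Injective v) :
    ∑ σ : Equiv.Perm (Fin 3), v (σ 1) * v (σ 2) ^ 2 *
      ((v (σ 1) - v (σ 0) / q) * (v (σ 2) - v (σ 0) / q) * (v (σ 2) - v (σ 1) / q)) /
      ((v (σ 1) - v (σ 0)) * (v (σ 2) - v (σ 0)) * (v (σ 2) - v (σ 1))) =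
    (2 * q ^ 2 - q - 1) / q ^ 2 * (v 0 * v 1 * v 2) +
      (v 0 ^ 2 * v 1 + v 0 ^ 2 * v 2 + v 1 ^ 2 * v 0 + v 1 ^ 2 * v 2 + v 2 ^ 2 * v 0 +
        v 2 ^ 2 * v 1) := by
  have h01 : v 0 - v 1 ≠ 0 := sub_ne_zero.mpr (hv.ne (by decide))
  have h02 : v 0 - v 2 ≠ 0 := sub_ne_zero.mpr (hv.ne (by decide))
  have h12 : v 1 - v 2 ≠ 0 := sub_ne_zero.mpr (hv.ne (by decide))
  have h10 : v 1 - v 0 ≠ 0 := sub_ne_zero.mpr (hv.ne (by decide))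
  have h20 : v 2 - v 0 ≠ 0 := sub_ne_zero.mpr (hv.ne (by decide))
  have h21 : v 2 - v 1 ≠ 0 := sub_ne_zero.mpr (hv.ne (by decide))
  rw [sum_perm_fin_three fun i j k => v j * v k ^ 2 *
      ((v j - v i / q) * (v k - v i / q) * (v k - v j / q)) /
      ((v j - v i) * (v k - v i) * (v k - v j))]
  field_simp
  ring

/-- `ω(1,2) = ((2p²−p−1)/p⁶)·sym_{1,1,1} + (1/p⁴)·sym_{2,1,0}`. -/
theorem omega_one_two :
    ω 1 2 = ((2 * p ^ 2 - p - 1) / p ^ 6) * sym 1 1 1 + (1 / p ^ 4) * sym 2 1 0 := by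
  rw [ω, if_neg (by decide), if_neg (by decide)]
  simp only [pow_one]
  rw [satake_sum_one_two p_ne_zero x_injective, sym_self, pow_one,
    sym_of_injective (by decide)]
  field_simp [p_ne_zero]
  ring
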